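/- Let Ω ⊆ ℝⁿ and let K : (0,∞) × Ω × Ω → ℂ be measurable such that for some constants C₀, α > 0 and μ ∈ (0,1], for all t > 0 and all x, y, y' ∈ Ω: |K_t(x,y)| ≤ C₀ t^{-n/2} e^{-α|x−y|²/t} and |K_t(x,y) − K_t(x,y')| ≤ C₀ t^{-n/2} (|y−y'|/√t)^μ. Define the subordinated kernel p_t(x,y) = π^{-1/2} ∫₀^∞ K_{t²/(4u)}(x,y) e^{-u} u^{-1/2} du. Then there exist C > 0 and ν ∈ (0,1) such that for all t > 0 and all x, y, y' ∈ Ω: |p_t(x,y)| ≤ C t / (t + |x−y|)^{n+1} and |p_t(x,y) − p_t(x,y')| ≤ C t^{-n} (|y−y'|/t)^ν. -/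

import Mathlib

open Set Function MeasureTheory Filter Topology Bornology
open scoped ENNReal NNReal BigOperators

noncomputable section

/-- ℝⁿ with its Euclidean structure. -/
abbrev Euc (n : ℕ) : Type := EuclideanSpace ℝ (Fin n)

/-- A closed axis-parallel cube in ℝⁿ, given by its center and its half side length. -/
structure Cube (n : ℕ) : Type where
  center : Euc n
  half : ℝ
  half_pos : 0 < half

namespace Cube

variable {n : ℕ}

/-- The dilated cube `ρQ`, as a subset of ℝⁿ. -/
def dset (Q : Cube n) (ρ : ℝ) : Set (Euc n) :=
  {x | ∀ i, |x i - Q.center i| ≤ ρ * Q.half}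

/-- The cube itself, as a subset of ℝⁿ. -/
def toSet (Q : Cube n) : Set (Euc n) := Q.dset 1

/-- The side length `ℓ(Q)`. -/
def side (Q : Cube n) : ℝ := 2 * Q.half

end Cube

/-- The graph of a function `φ : ℝᵐ → ℝ`, as a subset of `ℝ^(m+1)`. -/
def lipGraph {m : ℕ} (φ : Euc m → ℝ) : Set (Euc (m + 1)) :=
  {x | x (Fin.last m) = φ (WithLp.toLp 2 (fun i : Fin m => x i.castSucc))}

/-- A part (i.e. a subset) of a rotated graph of a Lipschitz function. -/
def IsLipschitzGraphPart {n : ℕ} (S : Set (Euc n)) : Prop :=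
  ∃ (m : ℕ) (e : Euc (m + 1) ≃ₗᵢ[ℝ] Euc n) (φ : Euc m → ℝ) (K : NNReal),
    LipschitzWith K φ ∧ S ⊆ e '' lipGraph φ

/-- A strongly Lipschitz domain of ℝⁿ: a proper open connected set whose boundary is a
finite union of parts of rotated graphs of Lipschitz functions, at most one of these
parts being infinite (= unbounded). -/
def IsStronglyLipschitzDomain {n : ℕ} (Ω : Set (Euc n)) : Prop :=
  IsOpen Ω ∧ IsConnected Ω ∧ Ω ≠ univ ∧
  ∃ (N : ℕ) (S : Fin N → Set (Euc n)),
    (∀ i, IsLipschitzGraphPart (S i)) ∧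
    frontier Ω = ⋃ i, S i ∧
    ∀ i j, ¬ IsBounded (S i) → ¬ IsBounded (S j) → i = j

/-- The mean value of `φ` over `s`. -/
def setAvg {n : ℕ} (s : Set (Euc n)) (φ : Euc n → ℝ) : ℝ :=
  (volume s).toReal⁻¹ * ∫ x in s, φ x

/-- The mean square oscillation `|s|⁻¹ ∫_s |φ - φ_s|²`. -/
def oscSq {n : ℕ} (s : Set (Euc n)) (φ : Euc n → ℝ) : ℝ≥0∞ :=
  (volume s)⁻¹ * ∫⁻ x in s, (‖φ x - setAvg s φ‖₊ : ℝ≥0∞) ^ 2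

/-- The mean square `|s|⁻¹ ∫_s |φ|²`. -/
def meanSq {n : ℕ} (s : Set (Euc n)) (φ : Euc n → ℝ) : ℝ≥0∞ :=
  (volume s)⁻¹ * ∫⁻ x in s, (‖φ x‖₊ : ℝ≥0∞) ^ 2

/-- A type (a) cube with respect to `Ω`: `4Q ⊆ Ω`. -/
def IsTypeACube {n : ℕ} (Ω : Set (Euc n)) (Q : Cube n) : Prop := Q.dset 4 ⊆ Ω

/-- A type (b) cube with respect to `Ω`: `2Q ⊆ Ω` and `4Q ∩ ∂Ω ≠ ∅`. -/
def IsTypeBCube {n : ℕ} (Ω : Set (Euc n)) (Q : Cube n) : Prop :=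
  Q.dset 2 ⊆ Ω ∧ (Q.dset 4 ∩ frontier Ω).Nonempty

/-- `a` is supported in `Q` and satisfies the normalization `‖a‖₂ ≤ |Q|^(-1/2)`. -/
def IsAtomOn {n : ℕ} (Q : Cube n) (a : Euc n → ℝ) : Prop :=
  support a ⊆ Q.toSet ∧ MemLp a 2 volume ∧
    eLpNorm a 2 volume ≤ (volume Q.toSet) ^ (-(1 : ℝ) / 2)

/-- A type (a) atom: supported in a type (a) cube, `L²`-normalized, with mean value zero. -/
def IsTypeAAtom {n : ℕ} (Ω : Set (Euc n)) (a : Euc n → ℝ) : Prop :=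
  ∃ Q : Cube n, IsTypeACube Ω Q ∧ IsAtomOn Q a ∧ ∫ x, a x = 0

/-- A type (b) atom: supported in a type (b) cube, `L²`-normalized (no mean value condition). -/
def IsTypeBAtom {n : ℕ} (Ω : Set (Euc n)) (a : Euc n → ℝ) : Prop :=
  ∃ Q : Cube n, IsTypeBCube Ω Q ∧ IsAtomOn Q a

/-- An `H¹(ℝⁿ)`-atom. -/
def IsH1Atom {n : ℕ} (a : Euc n → ℝ) : Prop :=
  ∃ Q : Cube n, IsAtomOn Q a ∧ ∫ x, a x = 0

/-- An `H¹_CW(Ω)`-atom: supported in `Q ∩ cl Ω` for a cube centered in `Ω`, with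
`‖a‖₂ ≤ |Q ∩ Ω|^(-1/2)` and mean value zero. -/
def IsCWAtom {n : ℕ} (Ω : Set (Euc n)) (a : Euc n → ℝ) : Prop :=
  ∃ Q : Cube n, Q.center ∈ Ω ∧ support a ⊆ Q.toSet ∩ closure Ω ∧
    MemLp a 2 volume ∧ eLpNorm a 2 volume ≤ (volume (Q.toSet ∩ Ω)) ^ (-(1 : ℝ) / 2) ∧
    ∫ x, a x = 0

/-- A type (a) local cube: `ℓ(Q) < 1` and `4Q ⊆ Ω`. -/
def IsLocalACube {n : ℕ} (Ω : Set (Euc n)) (Q : Cube n) : Prop :=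
  Q.side < 1 ∧ Q.dset 4 ⊆ Ω

/-- A type (b_far) local cube: `ℓ(Q) ≥ 1` and `4Q ⊆ Ω`. -/
def IsLocalBFarCube {n : ℕ} (Ω : Set (Euc n)) (Q : Cube n) : Prop :=
  1 ≤ Q.side ∧ Q.dset 4 ⊆ Ω

/-- A type (b) local cube: type (b_far) or type (b_close). -/
def IsLocalBCube {n : ℕ} (Ω : Set (Euc n)) (Q : Cube n) : Prop :=
  IsLocalBFarCube Ω Q ∨ IsTypeBCube Ω Q

/-- A type (a) local atom. -/
def IsLocalAAtom {n : ℕ} (Ω : Set (Euc n)) (a : Euc n → ℝ) : Prop :=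
  ∃ Q : Cube n, IsLocalACube Ω Q ∧ IsAtomOn Q a ∧ ∫ x, a x = 0

/-- A type (b_far) local atom (no mean value condition). -/
def IsLocalBFarAtom {n : ℕ} (Ω : Set (Euc n)) (a : Euc n → ℝ) : Prop :=
  ∃ Q : Cube n, IsLocalBFarCube Ω Q ∧ IsAtomOn Q a

/-- A type (b) local atom (no mean value condition). -/
def IsLocalBAtom {n : ℕ} (Ω : Set (Euc n)) (a : Euc n → ℝ) : Prop :=
  ∃ Q : Cube n, IsLocalBCube Ω Q ∧ IsAtomOn Q a

/-- An `h¹_CW(Ω)`-atom: as an `H¹_CW(Ω)`-atom, but the mean value condition is only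
required when `ℓ(Q) < 1`. -/
def Ish1CWAtom {n : ℕ} (Ω : Set (Euc n)) (a : Euc n → ℝ) : Prop :=
  ∃ Q : Cube n, Q.center ∈ Ω ∧ support a ⊆ Q.toSet ∩ closure Ω ∧
    MemLp a 2 volume ∧ eLpNorm a 2 volume ≤ (volume (Q.toSet ∩ Ω)) ^ (-(1 : ℝ) / 2) ∧
    (Q.side < 1 → ∫ x, a x = 0)

/-- The series `Σ c k • a k` converges to `f` in `L¹(Ω)`. -/
def L1SumOn {n : ℕ} (Ω : Set (Euc n)) (f : Euc n → ℝ) (c : ℕ → ℝ) (a : ℕ → Euc n → ℝ) : Prop :=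
  Tendsto (fun N => ∫⁻ x in Ω, (‖f x - ∑ k ∈ Finset.range N, c k * a k x‖₊ : ℝ≥0∞))
    atTop (𝓝 (0 : ℝ≥0∞))

/-- An atomic decomposition `f = Σ c k • a k` (in `L¹(Ω)`) where each `a k` is an atom in the
class described by the predicate `P` and `Σ |c k| < ∞`. -/
def AtomicDecomp {n : ℕ} (Ω : Set (Euc n)) (P : (Euc n → ℝ) → Prop)
    (f : Euc n → ℝ) (c : ℕ → ℝ) (a : ℕ → Euc n → ℝ) : Prop :=
  (∀ k, P (a k) ∨ c k = 0) ∧ Summable (fun k => |c k|) ∧ L1SumOn Ω f c a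

/-- Membership in the atomic space built from atoms satisfying `P`. -/
def MemAtomic {n : ℕ} (Ω : Set (Euc n)) (P : (Euc n → ℝ) → Prop) (f : Euc n → ℝ) : Prop :=
  ∃ c a, AtomicDecomp Ω P f c a

/-- The atomic norm: infimum of `Σ |c k|` over all atomic decompositions. -/
def atomicNorm {n : ℕ} (Ω : Set (Euc n)) (P : (Euc n → ℝ) → Prop) (f : Euc n → ℝ) : ℝ≥0∞ :=
  ⨅ (c : ℕ → ℝ) (a : ℕ → Euc n → ℝ) (_ : AtomicDecomp Ω P f c a),
    ENNReal.ofReal (∑' k, |c k|)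

/-- The convolution `φ_t ∗ f (x)` where `φ_t(x) = t⁻ⁿ φ(x/t)`. -/
def dilConv {n : ℕ} (φ f : Euc n → ℝ) (t : ℝ) (x : Euc n) : ℝ :=
  ∫ y, (t ^ n)⁻¹ * φ (t⁻¹ • (x - y)) * f y

/-- `‖f‖_{H¹(ℝⁿ)} = ‖sup_{t>0} |φ_t ∗ f|‖_{L¹}`. -/
def H1MaxNorm {n : ℕ} (φ f : Euc n → ℝ) : ℝ≥0∞ :=
  ∫⁻ x, ⨆ (t : ℝ) (_ : 0 < t), (‖dilConv φ f t x‖₊ : ℝ≥0∞)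

/-- `f ∈ H¹(ℝⁿ)` (with respect to the approximate identity generated by `φ`). -/
def MemH1 {n : ℕ} (φ f : Euc n → ℝ) : Prop :=
  LocallyIntegrable f volume ∧
  (∀ t : ℝ, 0 < t → ∀ x : Euc n,
    Integrable (fun y => (t ^ n)⁻¹ * φ (t⁻¹ • (x - y)) * f y) volume) ∧
  H1MaxNorm φ f < ⊤

/-- `f ∈ H¹_r(Ω)`: `f` is the restriction to `Ω` of a function in `H¹(ℝⁿ)`. -/
def MemH1r {n : ℕ} (φ : Euc n → ℝ) (Ω : Set (Euc n)) (f : Euc n → ℝ) : Prop :=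
  ∃ F, MemH1 φ F ∧ EqOn F f Ω

/-- `‖f‖_{H¹_r(Ω)}`: infimum of `‖F‖_{H¹(ℝⁿ)}` over extensions `F` of `f`. -/
def H1rNorm {n : ℕ} (φ : Euc n → ℝ) (Ω : Set (Euc n)) (f : Euc n → ℝ) : ℝ≥0∞ :=
  ⨅ (F : Euc n → ℝ) (_ : MemH1 φ F ∧ EqOn F f Ω), H1MaxNorm φ F

/-- `f ∈ H¹_z(Ω)`: the extension of `f` by zero outside `Ω` belongs to `H¹(ℝⁿ)`. -/
def MemH1z {n : ℕ} (φ : Euc n → ℝ) (Ω : Set (Euc n)) (f : Euc n → ℝ) : Prop :=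
  MemH1 φ (Ω.indicator f)

/-- `‖f‖_{H¹_z(Ω)}`: the `H¹(ℝⁿ)` norm of the extension of `f` by zero outside `Ω`. -/
def H1zNorm {n : ℕ} (φ : Euc n → ℝ) (Ω : Set (Euc n)) (f : Euc n → ℝ) : ℝ≥0∞ :=
  H1MaxNorm φ (Ω.indicator f)

/-- `‖f‖_{h¹(ℝⁿ)} = ‖sup_{0<t<1} |φ_t ∗ f|‖_{L¹}` (local Hardy space norm). -/
def h1MaxNorm {n : ℕ} (φ f : Euc n → ℝ) : ℝ≥0∞ :=
  ∫⁻ x, ⨆ (t : ℝ) (_ : 0 < t ∧ t < 1), (‖dilConv φ f t x‖₊ : ℝ≥0∞)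

/-- `f ∈ h¹(ℝⁿ)`. -/
def Memh1 {n : ℕ} (φ f : Euc n → ℝ) : Prop :=
  LocallyIntegrable f volume ∧
  (∀ t : ℝ, 0 < t → t < 1 → ∀ x : Euc n,
    Integrable (fun y => (t ^ n)⁻¹ * φ (t⁻¹ • (x - y)) * f y) volume) ∧
  h1MaxNorm φ f < ⊤

/-- `f ∈ h¹_r(Ω)`. -/
def Memh1r {n : ℕ} (φ : Euc n → ℝ) (Ω : Set (Euc n)) (f : Euc n → ℝ) : Prop :=
  ∃ F, Memh1 φ F ∧ EqOn F f Ω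

/-- `‖f‖_{h¹_r(Ω)}`. -/
def h1rNorm {n : ℕ} (φ : Euc n → ℝ) (Ω : Set (Euc n)) (f : Euc n → ℝ) : ℝ≥0∞ :=
  ⨅ (F : Euc n → ℝ) (_ : Memh1 φ F ∧ EqOn F f Ω), h1MaxNorm φ F

/-- `f ∈ h¹_z(Ω)`. -/
def Memh1z {n : ℕ} (φ : Euc n → ℝ) (Ω : Set (Euc n)) (f : Euc n → ℝ) : Prop :=
  Memh1 φ (Ω.indicator f)

/-- `‖f‖_{h¹_z(Ω)}`. -/
def h1zNorm {n : ℕ} (φ : Euc n → ℝ) (Ω : Set (Euc n)) (f : Euc n → ℝ) : ℝ≥0∞ :=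
  h1MaxNorm φ (Ω.indicator f)

/-- The square of the `BMO(ℝⁿ)` norm. -/
def BMONormSq {n : ℕ} (φ : Euc n → ℝ) : ℝ≥0∞ :=
  ⨆ Q : Cube n, oscSq Q.toSet φ

/-- `φ` is locally square-integrable on `Ω`. -/
def LocSqIntOn {n : ℕ} (Ω : Set (Euc n)) (φ : Euc n → ℝ) : Prop :=
  ∀ K : Set (Euc n), IsCompact K → K ⊆ Ω → MemLp φ 2 (volume.restrict K)

/-- `φ ∈ BMO(ℝⁿ)`. -/
def MemBMO {n : ℕ} (φ : Euc n → ℝ) : Prop :=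
  (∀ Q : Cube n, MemLp φ 2 (volume.restrict Q.toSet)) ∧ BMONormSq φ < ⊤

/-- `φ ∈ BMO_z(Ω)`: `φ ∈ BMO(ℝⁿ)` and `φ` is supported in `cl Ω`. -/
def MemBMOz {n : ℕ} (Ω : Set (Euc n)) (φ : Euc n → ℝ) : Prop :=
  MemBMO φ ∧ support φ ⊆ closure Ω

/-- The square of the `BMO_{z,a}(Ω)` norm. -/
def BMOzaNormSq {n : ℕ} (Ω : Set (Euc n)) (φ : Euc n → ℝ) : ℝ≥0∞ :=
  max (⨆ (Q : Cube n) (_ : IsTypeACube Ω Q), oscSq Q.toSet φ)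
      (⨆ (Q : Cube n) (_ : IsTypeBCube Ω Q), meanSq Q.toSet φ)

/-- The square of the `BMO_{r,a}(Ω)` norm. -/
def BMOraNormSq {n : ℕ} (Ω : Set (Euc n)) (φ : Euc n → ℝ) : ℝ≥0∞ :=
  ⨆ (Q : Cube n) (_ : IsTypeACube Ω Q), oscSq Q.toSet φ

/-- The square of the `BMO_CW(Ω)` norm. -/
def BMOcwNormSq {n : ℕ} (Ω : Set (Euc n)) (φ : Euc n → ℝ) : ℝ≥0∞ :=
  ⨆ (Q : Cube n) (_ : Q.center ∈ Ω), oscSq (Q.toSet ∩ Ω) φ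

/-- `φ ∈ BMO_r(Ω)`: `φ` is the restriction to `Ω` of a `BMO(ℝⁿ)` function. -/
def MemBMOr {n : ℕ} (Ω : Set (Euc n)) (φ : Euc n → ℝ) : Prop :=
  ∃ F, MemBMO F ∧ EqOn F φ Ω

/-- The square of the `BMO_r(Ω)` norm. -/
def BMOrNormSq {n : ℕ} (Ω : Set (Euc n)) (φ : Euc n → ℝ) : ℝ≥0∞ :=
  ⨅ (F : Euc n → ℝ) (_ : MemBMO F ∧ EqOn F φ Ω), BMONormSq F

/-- The subordinated (Poisson) kernel `p_t(x,y) = π^{-1/2} ∫₀^∞ K_{t²/4u}(x,y) e^{-u} u^{-1/2} du`. -/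
def subordKernel {n : ℕ} (K : ℝ → Euc n → Euc n → ℂ) (t : ℝ) (x y : Euc n) : ℂ :=
  ((Real.sqrt Real.pi)⁻¹ : ℝ) *
    ∫ u in Ioi (0 : ℝ), K (t ^ 2 / (4 * u)) x y * ((Real.exp (-u) * (Real.sqrt u)⁻¹ : ℝ) : ℂ)

/-! The substitution `s = t² / (4u)` turns the Gaussian bound `s^{-n/2} e^{-α|x-y|²/s}` on `K_s`
into `2ⁿ t⁻ⁿ u^{n/2} e^{-(4α|x-y|²/t²) u}`, so the integrand of `p_t(x,y)` is dominated by a Gamma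
density in `u`, and integrating gives
`|p_t(x,y)| ≲ t⁻ⁿ (1 + 4α|x-y|²/t²)^{-(n+1)/2} ≲ t / (t + |x-y|)^{n+1}`.
The same substitution turns the Hölder bound into `|p_t(x,y) - p_t(x,y')| ≲ t⁻ⁿ (|y-y'|/t)^μ`,
which is good when `|y-y'| ≤ t`; otherwise the uniform bound `|p_t| ≲ t⁻ⁿ` suffices, and
`min 1 (r^μ) ≤ r^{μ/2}` merges the two regimes with `ν = μ/2`. -/

section GammaDensity

variable {E : Type*} [NormedAddCommGroup E] {f : ℝ → E} {a r A : ℝ}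

lemma integrableOn_rpow_sub_one_mul_exp_neg_mul (ha : 0 < a) (hr : 0 < r) :
    IntegrableOn (fun u : ℝ => u ^ (a - 1) * Real.exp (-(r * u))) (Ioi 0) := by
  refine (integrableOn_rpow_mul_exp_neg_mul_rpow (s := a - 1) (p := 1) (by linarith) one_pos
    hr).congr_fun (fun u _ => ?_) measurableSet_Ioi
  simp only [Real.rpow_one, neg_mul]

lemma norm_setIntegral_Ioi_le_of_norm_le_gamma [NormedSpace ℝ E] (ha : 0 < a) (hr : 0 < r)
    (hle : ∀ u ∈ Ioi (0 : ℝ), ‖f u‖ ≤ A * (u ^ (a - 1) * Real.exp (-(r * u)))) :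
    ‖∫ u in Ioi (0 : ℝ), f u‖ ≤ A * ((1 / r) ^ a * Real.Gamma a) :=
  calc ‖∫ u in Ioi (0 : ℝ), f u‖ ≤ ∫ u in Ioi (0 : ℝ), A * (u ^ (a - 1) * Real.exp (-(r * u))) :=
        norm_integral_le_of_norm_le ((integrableOn_rpow_sub_one_mul_exp_neg_mul ha hr).const_mul A)
          ((ae_restrict_iff' measurableSet_Ioi).2 (ae_of_all _ hle))
    _ = A * ((1 / r) ^ a * Real.Gamma a) := by
        rw [integral_const_mul, Real.integral_rpow_mul_exp_neg_mul_Ioi ha hr]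

lemma integrableOn_Ioi_of_norm_le_gamma (ha : 0 < a) (hr : 0 < r)
    (hf : AEStronglyMeasurable f (volume.restrict (Ioi 0)))
    (hle : ∀ u ∈ Ioi (0 : ℝ), ‖f u‖ ≤ A * (u ^ (a - 1) * Real.exp (-(r * u)))) :
    IntegrableOn f (Ioi 0) :=
  ((integrableOn_rpow_sub_one_mul_exp_neg_mul ha hr).const_mul A).mono' hf
    ((ae_restrict_iff' measurableSet_Ioi).2 (ae_of_all _ hle))

end GammaDensity

section Substitution

variable {t u : ℝ}

lemma rpow_neg_div_two_sq_div_four_mul (n : ℕ) (ht : 0 < t) (hu : 0 < u) :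
    (t ^ 2 / (4 * u)) ^ (-(n : ℝ) / 2) = 2 ^ n * (t ^ n)⁻¹ * u ^ ((n : ℝ) / 2) := by
  have half_pow : ∀ b : ℝ, 0 ≤ b → (b ^ 2) ^ ((n : ℝ) / 2) = b ^ n := fun b hb => by
    rw [← Real.rpow_natCast b 2, ← Real.rpow_mul hb,
      show ((2 : ℕ) : ℝ) * ((n : ℝ) / 2) = n by push_cast; ring, Real.rpow_natCast]
  rw [neg_div, Real.rpow_neg (by positivity), ← Real.inv_rpow (by positivity), inv_div,
    Real.div_rpow (by positivity) (by positivity), Real.mul_rpow (by norm_num) hu.le,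
    show (4 : ℝ) = 2 ^ 2 by norm_num, half_pow 2 (by norm_num), half_pow t ht.le]
  ring

lemma sqrt_sq_div_four_mul (ht : 0 < t) :
    Real.sqrt (t ^ 2 / (4 * u)) = t / (2 * Real.sqrt u) := by
  rw [Real.sqrt_div (by positivity), Real.sqrt_sq ht.le, show (4 : ℝ) * u = 2 ^ 2 * u by norm_num,
    Real.sqrt_mul (by positivity), Real.sqrt_sq (by norm_num)]

lemma sqrt_inv_eq_rpow (hu : 0 < u) : (Real.sqrt u)⁻¹ = u ^ (-(1 : ℝ) / 2) := by
  rw [Real.sqrt_eq_rpow, neg_div, Real.rpow_neg hu.le]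

variable {n : ℕ} {C₀ : ℝ} {z : ℂ}

lemma norm_mul_exp_sqrt_inv_le_of_gaussian {α d : ℝ} (ht : 0 < t) (hu : 0 < u)
    (hz : ‖z‖ ≤
      C₀ * (t ^ 2 / (4 * u)) ^ (-(n : ℝ) / 2) * Real.exp (-α * d ^ 2 / (t ^ 2 / (4 * u)))) :
    ‖z * ((Real.exp (-u) * (Real.sqrt u)⁻¹ : ℝ) : ℂ)‖ ≤
      C₀ * 2 ^ n * (t ^ n)⁻¹ *
        (u ^ (((n : ℝ) + 1) / 2 - 1) * Real.exp (-((1 + 4 * α * d ^ 2 / t ^ 2) * u))) := by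
  have exp_arg : -α * d ^ 2 / (t ^ 2 / (4 * u)) = -((4 * α * d ^ 2 / t ^ 2) * u) := by
    field_simp
  have pow_u : u ^ ((n : ℝ) / 2) * u ^ (-(1 : ℝ) / 2) = u ^ (((n : ℝ) + 1) / 2 - 1) := by
    rw [← Real.rpow_add hu]; ring_nf
  have exp_u : Real.exp (-((4 * α * d ^ 2 / t ^ 2) * u)) * Real.exp (-u) =
      Real.exp (-((1 + 4 * α * d ^ 2 / t ^ 2) * u)) := by
    rw [← Real.exp_add]; ring_nf
  rw [norm_mul, Complex.norm_of_nonneg (by positivity)]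
  calc ‖z‖ * (Real.exp (-u) * (Real.sqrt u)⁻¹)
      ≤ C₀ * (t ^ 2 / (4 * u)) ^ (-(n : ℝ) / 2) * Real.exp (-α * d ^ 2 / (t ^ 2 / (4 * u))) *
          (Real.exp (-u) * (Real.sqrt u)⁻¹) := by gcongr
    _ = _ := by
        rw [rpow_neg_div_two_sq_div_four_mul n ht hu, exp_arg, sqrt_inv_eq_rpow hu, ← pow_u,
          ← exp_u]
        ring

lemma norm_mul_exp_sqrt_inv_le_of_holder {μ δ : ℝ} (ht : 0 < t) (hu : 0 < u) (hδ : 0 ≤ δ)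
    (hz : ‖z‖ ≤ C₀ * (t ^ 2 / (4 * u)) ^ (-(n : ℝ) / 2) * (δ / Real.sqrt (t ^ 2 / (4 * u))) ^ μ) :
    ‖z * ((Real.exp (-u) * (Real.sqrt u)⁻¹ : ℝ) : ℂ)‖ ≤
      C₀ * 2 ^ n * (t ^ n)⁻¹ * (2 ^ μ * (δ / t) ^ μ) *
        (u ^ (((n : ℝ) + 1 + μ) / 2 - 1) * Real.exp (-(1 * u))) := by
  have holder_arg : (δ / Real.sqrt (t ^ 2 / (4 * u))) ^ μ =
      2 ^ μ * u ^ (μ / 2) * (δ / t) ^ μ := by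
    rw [sqrt_sq_div_four_mul ht, div_div_eq_mul_div, mul_comm δ, mul_div_assoc,
      Real.mul_rpow (by positivity) (by positivity), Real.mul_rpow (by norm_num) (by positivity),
      Real.sqrt_eq_rpow, ← Real.rpow_mul hu.le, one_div_mul_eq_div]
  have pow_u : u ^ ((n : ℝ) / 2) * u ^ (μ / 2) * u ^ (-(1 : ℝ) / 2) =
      u ^ (((n : ℝ) + 1 + μ) / 2 - 1) := by
    rw [← Real.rpow_add hu, ← Real.rpow_add hu]; ring_nf
  rw [norm_mul, Complex.norm_of_nonneg (by positivity)]
  calc ‖z‖ * (Real.exp (-u) * (Real.sqrt u)⁻¹)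
      ≤ C₀ * (t ^ 2 / (4 * u)) ^ (-(n : ℝ) / 2) * (δ / Real.sqrt (t ^ 2 / (4 * u))) ^ μ *
          (Real.exp (-u) * (Real.sqrt u)⁻¹) := by gcongr
    _ = _ := by
        rw [rpow_neg_div_two_sq_div_four_mul n ht hu, holder_arg, sqrt_inv_eq_rpow hu, ← pow_u,
          one_mul]
        ring

end Substitution

section Elementary

variable {α t d : ℝ}

lemma add_sq_le_mul_sq_add_mul_sq (hα : 0 < α) :
    (t + d) ^ 2 ≤ 2 * max 1 (4 * α)⁻¹ * (t ^ 2 + 4 * α * d ^ 2) := by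
  have h1 : 1 ≤ max 1 (4 * α)⁻¹ := le_max_left _ _
  have h4α : 1 ≤ 4 * α * max 1 (4 * α)⁻¹ := by
    calc (1 : ℝ) = 4 * α * (4 * α)⁻¹ := by field_simp
      _ ≤ 4 * α * max 1 (4 * α)⁻¹ := by gcongr; exact le_max_right _ _
  nlinarith [sq_nonneg (t - d), mul_le_mul_of_nonneg_right h1 (sq_nonneg t),
    mul_le_mul_of_nonneg_right h4α (sq_nonneg d)]

lemma inv_pow_mul_rpow_le_poisson (n : ℕ) (hα : 0 < α) (ht : 0 < t) (hd : 0 ≤ d) :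
    (t ^ n)⁻¹ * (1 / (1 + 4 * α * d ^ 2 / t ^ 2)) ^ (((n : ℝ) + 1) / 2) ≤
      (2 * max 1 (4 * α)⁻¹) ^ (((n : ℝ) + 1) / 2) * (t / (t + d) ^ (n + 1)) := by
  set M := 2 * max 1 (4 * α)⁻¹
  have htd : 0 < t + d := by linarith
  have hbase : 1 / (1 + 4 * α * d ^ 2 / t ^ 2) ≤ M * (t / (t + d)) ^ 2 := by
    rw [one_add_div (by positivity), one_div_div, div_pow, ← mul_div_assoc,
      div_le_div_iff₀ (by positivity) (by positivity)]
    nlinarith [mul_le_mul_of_nonneg_left (add_sq_le_mul_sq_add_mul_sq (t := t) (d := d) hα)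
      (sq_nonneg t)]
  calc (t ^ n)⁻¹ * (1 / (1 + 4 * α * d ^ 2 / t ^ 2)) ^ (((n : ℝ) + 1) / 2)
      ≤ (t ^ n)⁻¹ * (M * (t / (t + d)) ^ 2) ^ (((n : ℝ) + 1) / 2) := by gcongr
    _ = (t ^ n)⁻¹ * (M ^ (((n : ℝ) + 1) / 2) * (t / (t + d)) ^ (n + 1)) := by
        rw [Real.mul_rpow (by positivity) (by positivity), ← Real.rpow_natCast _ 2,
          ← Real.rpow_mul (by positivity), ← Real.rpow_natCast _ (n + 1)]
        push_cast
        ring_nf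
    _ = M ^ (((n : ℝ) + 1) / 2) * (t / (t + d) ^ (n + 1)) := by
        rw [div_pow, pow_succ t]
        field_simp

lemma min_one_rpow_le_rpow {r μ ν : ℝ} (hr : 0 ≤ r) (hν : 0 ≤ ν) (hνμ : ν ≤ μ) :
    min 1 (r ^ μ) ≤ r ^ ν := by
  rcases le_total r 1 with hr1 | hr1
  · exact (min_le_right _ _).trans (Real.rpow_le_rpow_of_exponent_ge' hr hr1 hν hνμ)
  · exact (min_le_left _ _).trans (Real.one_le_rpow hr1 hν)

end Elementary

section SubordKernel

def subordIntegrand {n : ℕ} (K : ℝ → Euc n → Euc n → ℂ) (t : ℝ) (x y : Euc n) (u : ℝ) : ℂ :=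
  K (t ^ 2 / (4 * u)) x y * ((Real.exp (-u) * (Real.sqrt u)⁻¹ : ℝ) : ℂ)

variable {n : ℕ} {K : ℝ → Euc n → Euc n → ℂ} {C₀ α μ t : ℝ} {x y y' : Euc n}

lemma subordKernel_eq_integral_subordIntegrand :
    subordKernel K t x y =
      ((Real.sqrt Real.pi)⁻¹ : ℝ) * ∫ u in Ioi (0 : ℝ), subordIntegrand K t x y u :=
  rfl

lemma norm_subordIntegrand_le (ht : 0 < t)
    (hK : ∀ s, 0 < s → ‖K s x y‖ ≤ C₀ * s ^ (-(n : ℝ) / 2) * Real.exp (-α * ‖x - y‖ ^ 2 / s)) :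
    ∀ u ∈ Ioi (0 : ℝ), ‖subordIntegrand K t x y u‖ ≤ C₀ * 2 ^ n * (t ^ n)⁻¹ *
      (u ^ (((n : ℝ) + 1) / 2 - 1) * Real.exp (-((1 + 4 * α * ‖x - y‖ ^ 2 / t ^ 2) * u))) :=
  fun u hu => norm_mul_exp_sqrt_inv_le_of_gaussian ht hu (hK _ (by have : 0 < u := hu; positivity))

lemma integrableOn_subordIntegrand (ht : 0 < t) (hα : 0 ≤ α)
    (hmeas : Measurable fun s => K s x y)
    (hK : ∀ s, 0 < s → ‖K s x y‖ ≤ C₀ * s ^ (-(n : ℝ) / 2) * Real.exp (-α * ‖x - y‖ ^ 2 / s)) :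
    IntegrableOn (subordIntegrand K t x y) (Ioi 0) :=
  integrableOn_Ioi_of_norm_le_gamma (by positivity) (by positivity)
    (by unfold subordIntegrand; fun_prop) (norm_subordIntegrand_le ht hK)

lemma norm_subordKernel_le (ht : 0 < t) (hα : 0 ≤ α)
    (hK : ∀ s, 0 < s → ‖K s x y‖ ≤ C₀ * s ^ (-(n : ℝ) / 2) * Real.exp (-α * ‖x - y‖ ^ 2 / s)) :
    ‖subordKernel K t x y‖ ≤ (Real.sqrt Real.pi)⁻¹ * C₀ * 2 ^ n * Real.Gamma (((n : ℝ) + 1) / 2) *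
      ((t ^ n)⁻¹ * (1 / (1 + 4 * α * ‖x - y‖ ^ 2 / t ^ 2)) ^ (((n : ℝ) + 1) / 2)) := by
  rw [subordKernel_eq_integral_subordIntegrand, norm_mul, Complex.norm_of_nonneg (by positivity)]
  calc (Real.sqrt Real.pi)⁻¹ * ‖∫ u in Ioi (0 : ℝ), subordIntegrand K t x y u‖
      ≤ (Real.sqrt Real.pi)⁻¹ * (C₀ * 2 ^ n * (t ^ n)⁻¹ *
          ((1 / (1 + 4 * α * ‖x - y‖ ^ 2 / t ^ 2)) ^ (((n : ℝ) + 1) / 2) *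
            Real.Gamma (((n : ℝ) + 1) / 2))) := by
        gcongr
        exact norm_setIntegral_Ioi_le_of_norm_le_gamma (by positivity) (by positivity)
          (norm_subordIntegrand_le ht hK)
    _ = _ := by ring

lemma norm_subordKernel_sub_le (ht : 0 < t) (hμ : 0 ≤ μ)
    (hy : IntegrableOn (subordIntegrand K t x y) (Ioi 0))
    (hy' : IntegrableOn (subordIntegrand K t x y') (Ioi 0))
    (hK : ∀ s, 0 < s →
      ‖K s x y - K s x y'‖ ≤ C₀ * s ^ (-(n : ℝ) / 2) * (‖y - y'‖ / Real.sqrt s) ^ μ) :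
    ‖subordKernel K t x y - subordKernel K t x y'‖ ≤
      (Real.sqrt Real.pi)⁻¹ * C₀ * 2 ^ n * 2 ^ μ * Real.Gamma (((n : ℝ) + 1 + μ) / 2) *
        ((t ^ n)⁻¹ * (‖y - y'‖ / t) ^ μ) := by
  have hle : ∀ u ∈ Ioi (0 : ℝ), ‖subordIntegrand K t x y u - subordIntegrand K t x y' u‖ ≤
      C₀ * 2 ^ n * (t ^ n)⁻¹ * (2 ^ μ * (‖y - y'‖ / t) ^ μ) *
        (u ^ (((n : ℝ) + 1 + μ) / 2 - 1) * Real.exp (-(1 * u))) := fun u hu => by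
    rw [subordIntegrand, subordIntegrand, ← sub_mul]
    exact norm_mul_exp_sqrt_inv_le_of_holder ht hu (norm_nonneg _)
      (hK _ (by have : 0 < u := hu; positivity))
  rw [subordKernel_eq_integral_subordIntegrand, subordKernel_eq_integral_subordIntegrand, ← mul_sub,
    ← integral_sub hy hy', norm_mul, Complex.norm_of_nonneg (by positivity)]
  calc (Real.sqrt Real.pi)⁻¹ *
        ‖∫ u in Ioi (0 : ℝ), (subordIntegrand K t x y u - subordIntegrand K t x y' u)‖
      ≤ (Real.sqrt Real.pi)⁻¹ * (C₀ * 2 ^ n * (t ^ n)⁻¹ * (2 ^ μ * (‖y - y'‖ / t) ^ μ) *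
          ((1 / 1) ^ (((n : ℝ) + 1 + μ) / 2) * Real.Gamma (((n : ℝ) + 1 + μ) / 2))) := by
        gcongr
        exact norm_setIntegral_Ioi_le_of_norm_le_gamma (by positivity) one_pos hle
    _ = _ := by rw [div_one, Real.one_rpow]; ring

lemma norm_subordKernel_le_poisson (ht : 0 < t) (hC₀ : 0 ≤ C₀) (hα : 0 < α)
    (hK : ∀ s, 0 < s → ‖K s x y‖ ≤ C₀ * s ^ (-(n : ℝ) / 2) * Real.exp (-α * ‖x - y‖ ^ 2 / s)) :
    ‖subordKernel K t x y‖ ≤ (Real.sqrt Real.pi)⁻¹ * C₀ * 2 ^ n * Real.Gamma (((n : ℝ) + 1) / 2) *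
      ((2 * max 1 (4 * α)⁻¹) ^ (((n : ℝ) + 1) / 2) * (t / (t + ‖x - y‖) ^ (n + 1))) :=
  (norm_subordKernel_le ht hα.le hK).trans (mul_le_mul_of_nonneg_left
    (inv_pow_mul_rpow_le_poisson n hα ht (norm_nonneg _)) (by positivity))

lemma norm_subordKernel_le_inv_pow (ht : 0 < t) (hC₀ : 0 ≤ C₀) (hα : 0 ≤ α)
    (hK : ∀ s, 0 < s → ‖K s x y‖ ≤ C₀ * s ^ (-(n : ℝ) / 2) * Real.exp (-α * ‖x - y‖ ^ 2 / s)) :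
    ‖subordKernel K t x y‖ ≤
      (Real.sqrt Real.pi)⁻¹ * C₀ * 2 ^ n * Real.Gamma (((n : ℝ) + 1) / 2) * (t ^ n)⁻¹ := by
  have hle_one : (1 / (1 + 4 * α * ‖x - y‖ ^ 2 / t ^ 2)) ^ (((n : ℝ) + 1) / 2) ≤ 1 :=
    Real.rpow_le_one (by positivity)
      ((div_le_one (by positivity)).2 (le_add_of_nonneg_right (by positivity))) (by positivity)
  exact (norm_subordKernel_le ht hα hK).trans (mul_le_mul_of_nonneg_left
    (mul_le_of_le_one_right (by positivity) hle_one) (by positivity))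

lemma norm_subordKernel_sub_le_rpow (ht : 0 < t) (hC₀ : 0 ≤ C₀) (hα : 0 ≤ α) {ν : ℝ}
    (hν : 0 ≤ ν) (hνμ : ν ≤ μ)
    (hy : IntegrableOn (subordIntegrand K t x y) (Ioi 0))
    (hy' : IntegrableOn (subordIntegrand K t x y') (Ioi 0))
    (hKy : ∀ s, 0 < s → ‖K s x y‖ ≤ C₀ * s ^ (-(n : ℝ) / 2) * Real.exp (-α * ‖x - y‖ ^ 2 / s))
    (hKy' : ∀ s, 0 < s → ‖K s x y'‖ ≤ C₀ * s ^ (-(n : ℝ) / 2) * Real.exp (-α * ‖x - y'‖ ^ 2 / s))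
    (hK : ∀ s, 0 < s →
      ‖K s x y - K s x y'‖ ≤ C₀ * s ^ (-(n : ℝ) / 2) * (‖y - y'‖ / Real.sqrt s) ^ μ) :
    ‖subordKernel K t x y - subordKernel K t x y'‖ ≤
      max (2 * ((Real.sqrt Real.pi)⁻¹ * C₀ * 2 ^ n * Real.Gamma (((n : ℝ) + 1) / 2)))
        ((Real.sqrt Real.pi)⁻¹ * C₀ * 2 ^ n * 2 ^ μ * Real.Gamma (((n : ℝ) + 1 + μ) / 2)) *
        (t ^ n)⁻¹ * (‖y - y'‖ / t) ^ ν := by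
  set A := (Real.sqrt Real.pi)⁻¹ * C₀ * 2 ^ n * Real.Gamma (((n : ℝ) + 1) / 2)
  set B := (Real.sqrt Real.pi)⁻¹ * C₀ * 2 ^ n * 2 ^ μ * Real.Gamma (((n : ℝ) + 1 + μ) / 2)
  have hcrude : ‖subordKernel K t x y - subordKernel K t x y'‖ ≤ max (2 * A) B * (t ^ n)⁻¹ :=
    calc _ ≤ A * (t ^ n)⁻¹ + A * (t ^ n)⁻¹ := (norm_sub_le _ _).trans
          (add_le_add (norm_subordKernel_le_inv_pow ht hC₀ hα hKy)
            (norm_subordKernel_le_inv_pow ht hC₀ hα hKy'))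
      _ ≤ max (2 * A) B * (t ^ n)⁻¹ := by
          rw [← two_mul, ← mul_assoc]; gcongr; exact le_max_left _ _
  have hfine : ‖subordKernel K t x y - subordKernel K t x y'‖ ≤
      max (2 * A) B * (t ^ n)⁻¹ * (‖y - y'‖ / t) ^ μ :=
    (norm_subordKernel_sub_le ht (hν.trans hνμ) hy hy' hK).trans
      (by rw [← mul_assoc]; gcongr; exact le_max_right _ _)
  calc _ ≤ max (2 * A) B * (t ^ n)⁻¹ * min 1 ((‖y - y'‖ / t) ^ μ) := by
        rw [mul_min_of_nonneg _ _ (by positivity), mul_one]; exact le_min hcrude hfine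
    _ ≤ max (2 * A) B * (t ^ n)⁻¹ * (‖y - y'‖ / t) ^ ν := by
        gcongr; exact min_one_rpow_le_rpow (by positivity) hν hνμ

end SubordKernel

theorem stmt_10_general {n : ℕ} (Ω : Set (Euc n)) (K : ℝ → Euc n → Euc n → ℂ)
    (hK : Measurable fun p : ℝ × Euc n × Euc n => K p.1 p.2.1 p.2.2)
    (C₀ α μ : ℝ) (hC₀ : 0 < C₀) (hα : 0 < α) (hμ : 0 < μ) (hμ1 : μ ≤ 1)
    (hbound : ∀ t : ℝ, 0 < t → ∀ x ∈ Ω, ∀ y ∈ Ω,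
      ‖K t x y‖ ≤ C₀ * t ^ (-(n : ℝ) / 2) * Real.exp (-α * ‖x - y‖ ^ 2 / t))
    (hholder : ∀ t : ℝ, 0 < t → ∀ x ∈ Ω, ∀ y ∈ Ω, ∀ y' ∈ Ω,
      ‖K t x y - K t x y'‖ ≤ C₀ * t ^ (-(n : ℝ) / 2) * (‖y - y'‖ / Real.sqrt t) ^ μ) :
    ∃ C : ℝ, 0 < C ∧ ∃ ν : ℝ, 0 < ν ∧ ν < 1 ∧
      ∀ t : ℝ, 0 < t → ∀ x ∈ Ω, ∀ y ∈ Ω, ∀ y' ∈ Ω,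
        ‖subordKernel K t x y‖ ≤ C * t / (t + ‖x - y‖) ^ (n + 1) ∧
        ‖subordKernel K t x y - subordKernel K t x y'‖ ≤
          C * t ^ (-(n : ℝ)) * (‖y - y'‖ / t) ^ ν := by
  set A := (Real.sqrt Real.pi)⁻¹ * C₀ * 2 ^ n * Real.Gamma (((n : ℝ) + 1) / 2)
  set B := (Real.sqrt Real.pi)⁻¹ * C₀ * 2 ^ n * 2 ^ μ * Real.Gamma (((n : ℝ) + 1 + μ) / 2)
  set P := A * (2 * max 1 (4 * α)⁻¹) ^ (((n : ℝ) + 1) / 2)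
  refine ⟨max P (max (2 * A) B), by positivity, μ / 2, by positivity, by linarith,
    fun t ht x hx y hy y' hy' => ⟨?_, ?_⟩⟩
  · calc ‖subordKernel K t x y‖ ≤ P * (t / (t + ‖x - y‖) ^ (n + 1)) :=
          (norm_subordKernel_le_poisson ht hC₀.le hα (fun s hs => hbound s hs x hx y hy)).trans_eq
            (mul_assoc _ _ _).symm
      _ ≤ max P (max (2 * A) B) * t / (t + ‖x - y‖) ^ (n + 1) := by
          rw [mul_div_assoc]; gcongr; exact le_max_left _ _
  · have hint : ∀ z ∈ Ω, IntegrableOn (subordIntegrand K t x z) (Ioi 0) := fun z hz =>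
      integrableOn_subordIntegrand ht hα.le
        (hK.comp (measurable_id.prodMk measurable_const : Measurable fun s : ℝ => (s, x, z)))
        (fun s hs => hbound s hs x hx z hz)
    calc ‖subordKernel K t x y - subordKernel K t x y'‖
        ≤ max (2 * A) B * (t ^ n)⁻¹ * (‖y - y'‖ / t) ^ (μ / 2) :=
          norm_subordKernel_sub_le_rpow ht hC₀.le hα.le (by positivity) (by linarith)
            (hint y hy) (hint y' hy') (fun s hs => hbound s hs x hx y hy)
            (fun s hs => hbound s hs x hx y' hy') (fun s hs => hholder s hs x hx y hy y' hy')
      _ ≤ max P (max (2 * A) B) * t ^ (-(n : ℝ)) * (‖y - y'‖ / t) ^ (μ / 2) := by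
          rw [Real.rpow_neg ht.le, Real.rpow_natCast]; gcongr ?_ * _ * _; exact le_max_right _ _

/-- Gaussian and Hölder bounds on a kernel `K_t` yield Poisson-type decay
and Hölder bounds for the subordinated kernel `p_t`. -/
theorem stmt_10 {n : ℕ} (hn : 1 ≤ n) (Ω : Set (Euc n)) (K : ℝ → Euc n → Euc n → ℂ)
    (hK : Measurable fun p : ℝ × Euc n × Euc n => K p.1 p.2.1 p.2.2)
    (C₀ α μ : ℝ) (hC₀ : 0 < C₀) (hα : 0 < α) (hμ : 0 < μ) (hμ1 : μ ≤ 1)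
    (hbound : ∀ t : ℝ, 0 < t → ∀ x ∈ Ω, ∀ y ∈ Ω,
      ‖K t x y‖ ≤ C₀ * t ^ (-(n : ℝ) / 2) * Real.exp (-α * ‖x - y‖ ^ 2 / t))
    (hholder : ∀ t : ℝ, 0 < t → ∀ x ∈ Ω, ∀ y ∈ Ω, ∀ y' ∈ Ω,
      ‖K t x y - K t x y'‖ ≤ C₀ * t ^ (-(n : ℝ) / 2) * (‖y - y'‖ / Real.sqrt t) ^ μ) :
    ∃ C : ℝ, 0 < C ∧ ∃ ν : ℝ, 0 < ν ∧ ν < 1 ∧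
      ∀ t : ℝ, 0 < t → ∀ x ∈ Ω, ∀ y ∈ Ω, ∀ y' ∈ Ω,
        ‖subordKernel K t x y‖ ≤ C * t / (t + ‖x - y‖) ^ (n + 1) ∧
        ‖subordKernel K t x y - subordKernel K t x y'‖ ≤
          C * t ^ (-(n : ℝ)) * (‖y - y'‖ / t) ^ ν :=
  stmt_10_general Ω K hK C₀ α μ hC₀ hα hμ hμ1 hbound hholder

end
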